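/- arXiv:2401.00636 — 4 statements merged into one kernel-verified Lean document; each statement's English description precedes it below -/
import Mathlib

section
/- If a function f : ℂ → ℂ is simultaneously a rational function of s and a rational function of e^{2πis} (i.e., f(s) = P(s) = Q(e^{2πis}) for rational functions P, Q on the common domain of definition), then f is constant. -/
/-!
Clearing denominators, `p₁(s) q₂(e(s)) = q₁(e(s)) p₂(s)` with `e(s) = exp(2πis)` is an identity
between entire functions on an open set, hence on all of `ℂ`. Since `e` has period `1`, comparing
the identity at `s` and `s + 1` gives the polynomial identity `p₁(X) p₂(X+1) = p₁(X+1) p₂(X)`.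
So `z ↦ mult_z(p₁) - mult_z(p₂)` is invariant under `z ↦ z + 1`; it vanishes far out along
`z + ℕ`, hence everywhere, and `p₁, p₂` have the same roots: `p₁ = c p₂`.
-/

open Complex Polynomial Real Set Filter Topology

theorem Differentiable.eq_of_eqOn_of_isOpen {E : Type*} [NormedAddCommGroup E] [NormedSpace ℂ E]
    [CompleteSpace E] {f g : ℂ → E} (hf : Differentiable ℂ f) (hg : Differentiable ℂ g)
    {U : Set ℂ} (hU : IsOpen U) (hne : U.Nonempty) (h : EqOn f g U) : f = g := by
  obtain ⟨z, hz⟩ := hne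
  exact AnalyticOnNhd.eq_of_eventuallyEq (analyticOnNhd_univ_iff_differentiable.2 hf)
    (analyticOnNhd_univ_iff_differentiable.2 hg) (eventually_of_mem (hU.mem_nhds hz) h)

theorem Complex.periodic_exp_two_pi_I_mul :
    Function.Periodic (fun s ↦ exp (2 * π * I * s)) 1 := by
  intro s
  simp only [mul_add, mul_one, exp_add, exp_two_pi_mul_I]

namespace Polynomial

theorem rootMultiplicity_comp_X_add_C {R : Type*} [CommRing R] (p : R[X]) (a z : R) :
    (p.comp (X + C a)).rootMultiplicity z = p.rootMultiplicity (z + a) := by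
  simpa using rootMultiplicity_comp_C_mul_X_add_C p 1 a z isUnit_one

section Domain

variable {R : Type*} [CommRing R] [IsDomain R]

theorem exists_nat_not_isRoot_add [CharZero R] {p : R[X]} (hp : p ≠ 0) (z : R) :
    ∃ n : ℕ, ¬p.IsRoot (z + n) := by
  by_contra! h
  refine hp (eq_zero_of_infinite_isRoot p ((infinite_range_of_injective ?_).mono
    (range_subset_iff.2 h)))
  exact (add_right_injective z).comp Nat.cast_injective

variable {p q : R[X]}

theorem rootMultiplicity_add_add_one_eq_of_mul_comp_eq (hp : p ≠ 0) (hq : q ≠ 0)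
    (h : p * q.comp (X + C 1) = p.comp (X + C 1) * q) (z : R) :
    p.rootMultiplicity z + q.rootMultiplicity (z + 1) =
      p.rootMultiplicity (z + 1) + q.rootMultiplicity z := by
  have hpc : p.comp (X + C 1) ≠ 0 := comp_X_add_C_ne_zero_iff.2 hp
  have hqc : q.comp (X + C 1) ≠ 0 := comp_X_add_C_ne_zero_iff.2 hq
  have := congrArg (rootMultiplicity z) h
  rwa [rootMultiplicity_mul (mul_ne_zero hp hqc), rootMultiplicity_mul (mul_ne_zero hpc hq),
    rootMultiplicity_comp_X_add_C, rootMultiplicity_comp_X_add_C] at this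

theorem rootMultiplicity_add_add_nat_eq_of_mul_comp_eq (hp : p ≠ 0) (hq : q ≠ 0)
    (h : p * q.comp (X + C 1) = p.comp (X + C 1) * q) (z : R) (n : ℕ) :
    p.rootMultiplicity z + q.rootMultiplicity (z + n) =
      p.rootMultiplicity (z + n) + q.rootMultiplicity z := by
  induction n with
  | zero => simp
  | succ n ih =>
    have := rootMultiplicity_add_add_one_eq_of_mul_comp_eq hp hq h (z + n)
    rw [Nat.cast_succ, ← add_assoc]
    omega

theorem rootMultiplicity_eq_of_mul_comp_eq [CharZero R] (hp : p ≠ 0) (hq : q ≠ 0)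
    (h : p * q.comp (X + C 1) = p.comp (X + C 1) * q) (z : R) :
    p.rootMultiplicity z = q.rootMultiplicity z := by
  obtain ⟨n, hn⟩ := exists_nat_not_isRoot_add (mul_ne_zero hp hq) z
  rw [IsRoot, eval_mul, mul_eq_zero, not_or] at hn
  have := rootMultiplicity_add_add_nat_eq_of_mul_comp_eq hp hq h z n
  rw [rootMultiplicity_eq_zero hn.1, rootMultiplicity_eq_zero hn.2] at this
  omega

end Domain

theorem exists_eq_mul_C_of_mul_comp_eq {K : Type*} [Field K] [IsAlgClosed K] [CharZero K]
    {p q : K[X]} (hq : q ≠ 0) (h : p * q.comp (X + C 1) = p.comp (X + C 1) * q) :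
    ∃ c, p = q * C c := by
  classical
  rcases eq_or_ne p 0 with rfl | hp
  · exact ⟨0, by simp⟩
  have hroots : q.roots = p.roots := Multiset.ext.2 fun z ↦ by
    rw [count_roots, count_roots, rootMultiplicity_eq_of_mul_comp_eq hp hq h]
  obtain ⟨u, hu⟩ := (IsAlgClosed.associated_iff_roots_eq_roots hq hp).2 hroots
  obtain ⟨c, -, hc⟩ := isUnit_iff.1 u.isUnit
  exact ⟨c, by rw [hc, hu]⟩

end Polynomial

theorem rational_in_s_and_exp_is_constant_general
    (p₁ p₂ q₁ q₂ : Polynomial ℂ) (hp₂ : p₂ ≠ 0)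
    (U : Set ℂ) (hU : IsOpen U) (hne : U.Nonempty)
    (heq : ∀ s ∈ U, p₂.eval s ≠ 0 ∧
      q₂.eval (Complex.exp (2 * (Real.pi : ℂ) * Complex.I * s)) ≠ 0 ∧
      p₁.eval s / p₂.eval s =
        q₁.eval (Complex.exp (2 * (Real.pi : ℂ) * Complex.I * s)) /
          q₂.eval (Complex.exp (2 * (Real.pi : ℂ) * Complex.I * s))) :
    ∃ c : ℂ, ∀ s ∈ U, p₁.eval s / p₂.eval s = c := by
  set e : ℂ → ℂ := fun s ↦ exp (2 * π * I * s)
  have hcross : ∀ s, p₁.eval s * q₂.eval (e s) = q₁.eval (e s) * p₂.eval s := by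
    refine congrFun (Differentiable.eq_of_eqOn_of_isOpen (by fun_prop) (by fun_prop) hU hne
      fun s hs ↦ ?_)
    obtain ⟨h₁, h₂, h⟩ := heq s hs
    exact (div_eq_div_iff h₁ h₂).1 h
  have hshift : p₁ * p₂.comp (X + C 1) = p₁.comp (X + C 1) * p₂ := by
    obtain ⟨s₀, hs₀⟩ := hne
    have hne₀ : {s | q₂.eval (e s) ≠ 0} ∈ 𝓝 s₀ :=
      (isOpen_ne_fun (by fun_prop) continuous_const).mem_nhds (heq s₀ hs₀).2.1
    refine eq_of_infinite_eval_eq _ _ ((infinite_of_mem_nhds s₀ hne₀).mono fun s hs ↦ ?_)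
    have h₀ := hcross s
    have h₁ := hcross (s + 1)
    rw [show e (s + 1) = e s from periodic_exp_two_pi_I_mul s] at h₁
    refine mul_left_cancel₀ (hs : q₂.eval (e s) ≠ 0) ?_
    simp only [eval_mul, eval_comp, eval_add, eval_X, eval_C]
    linear_combination p₂.eval (s + 1) * h₀ - p₂.eval s * h₁
  obtain ⟨c, hc⟩ := exists_eq_mul_C_of_mul_comp_eq hp₂ hshift
  exact ⟨c, fun s hs ↦ by rw [hc, eval_mul, eval_C, mul_div_cancel_left₀ _ (heq s hs).1]⟩

/-- A function which is simultaneously a rational function of `s` and a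
rational function of `e^{2πis}` (equality holding on a nonempty open set where both
sides are defined) is constant. -/
theorem rational_in_s_and_exp_is_constant
    (p₁ p₂ q₁ q₂ : Polynomial ℂ) (hp₂ : p₂ ≠ 0) (hq₂ : q₂ ≠ 0)
    (U : Set ℂ) (hU : IsOpen U) (hne : U.Nonempty)
    (heq : ∀ s ∈ U, p₂.eval s ≠ 0 ∧
      q₂.eval (Complex.exp (2 * (Real.pi : ℂ) * Complex.I * s)) ≠ 0 ∧
      p₁.eval s / p₂.eval s =
        q₁.eval (Complex.exp (2 * (Real.pi : ℂ) * Complex.I * s)) /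
          q₂.eval (Complex.exp (2 * (Real.pi : ℂ) * Complex.I * s))) :
    ∃ c : ℂ, ∀ s ∈ U, p₁.eval s / p₂.eval s = c :=
  rational_in_s_and_exp_is_constant_general p₁ p₂ q₁ q₂ hp₂ U hU hne heq
end

section
/- Let E : ℂ^n → (ℂ^×)^n be given by E(s₁,...,sₙ) = (e^{2πis₁},...,e^{2πisₙ}). If Y ⊂ ℂ^n is an affine hyperplane such that the functions e^{2πis₁},...,e^{2πisₙ} restricted to Y are algebraically dependent over ℂ (i.e., E(Y) is contained in an algebraic hypersurface of (ℂ^×)^n), then Y is a translate of a hyperplane whose normal vector can be chosen with rational (equivalently integer) coordinates. -/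
open Complex

namespace HyperplaneAux

noncomputable def ell {n : ℕ} (m : Fin n →₀ ℕ) (v : Fin n → ℂ) : ℂ :=
  ∑ i, (m i : ℂ) * v i

lemma ell_add {n : ℕ} (m : Fin n →₀ ℕ) (v w : Fin n → ℂ) :
    ell m (v + w) = ell m v + ell m w := by
  simp [ell, mul_add, Finset.sum_add_distrib]

lemma ell_smul {n : ℕ} (m : Fin n →₀ ℕ) (r : ℂ) (v : Fin n → ℂ) :
    ell m (r • v) = r * ell m v := by
  simp [ell, Finset.mul_sum, mul_left_comm]

lemma ell_zero {n : ℕ} (m : Fin n →₀ ℕ) : ell m (0 : Fin n → ℂ) = 0 := by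
  simp [ell]

/-- Evaluation of an `MvPolynomial` at coordinatewise exponentials. -/
lemma eval_exp_eq {n : ℕ} (z : ℂ) (L : MvPolynomial (Fin n) ℂ) (s : Fin n → ℂ) :
    MvPolynomial.eval (fun i => Complex.exp (z * s i)) L
      = ∑ m ∈ L.support, L.coeff m * Complex.exp (z * ell m s) := by
  rw [MvPolynomial.eval_eq']
  refine Finset.sum_congr rfl fun m _ => ?_
  congr 1
  have h1 : ∀ i : Fin n, Complex.exp (z * s i) ^ (m i)
      = Complex.exp ((m i : ℂ) * (z * s i)) := fun i => (Complex.exp_nat_mul _ _).symm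
  calc (∏ i, Complex.exp (z * s i) ^ (m i))
      = ∏ i, Complex.exp ((m i : ℂ) * (z * s i)) := by
        exact Finset.prod_congr rfl fun i _ => h1 i
    _ = Complex.exp (∑ i, (m i : ℂ) * (z * s i)) := (Complex.exp_sum _ _).symm
    _ = Complex.exp (z * ell m s) := by
        congr 1
        rw [ell, Finset.mul_sum]
        exact Finset.sum_congr rfl fun i _ => by ring

/-- The kernel hyperplane as a submodule. -/
noncomputable def V {n : ℕ} (a : Fin n → ℂ) : Submodule ℂ (Fin n → ℂ) where
  carrier := {v | ∑ i, a i * v i = 0}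
  add_mem' := by
    intro x y hx hy
    simp only [Set.mem_setOf_eq] at *
    simp [mul_add, Finset.sum_add_distrib, hx, hy]
  zero_mem' := by simp
  smul_mem' := by
    intro r x hx
    simp only [Set.mem_setOf_eq, Pi.smul_apply, smul_eq_mul] at *
    rw [show (∑ i, a i * (r * x i)) = r * ∑ i, a i * x i from by
      simp [Finset.mul_sum, mul_left_comm], hx, mul_zero]

/-- The character attached to a monomial. -/
noncomputable def chi {n : ℕ} (a : Fin n → ℂ) (z : ℂ) (m : Fin n →₀ ℕ) :
    Multiplicative (V a) →* ℂ where
  toFun v := Complex.exp (z * ell m ((Multiplicative.toAdd v : V a) : Fin n → ℂ))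
  map_one' := by
    simp [ell_zero]
  map_mul' x y := by
    show Complex.exp (z * ell m ((Multiplicative.toAdd (x * y) : V a) : Fin n → ℂ)) = _
    rw [show ((Multiplicative.toAdd (x * y) : V a) : Fin n → ℂ)
        = ((Multiplicative.toAdd x : V a) : Fin n → ℂ)
          + ((Multiplicative.toAdd y : V a) : Fin n → ℂ) from rfl, ell_add, mul_add,
      Complex.exp_add]

end HyperplaneAux

open HyperplaneAux

/-- If `Y = {s : ∑ aᵢ sᵢ = c}` is an affine hyperplane in ℂ^n whose image
under `E(s) = (e^{2πis₁},...,e^{2πisₙ})` is contained in an algebraic hypersurface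
(the zero set of a nonzero polynomial, which on the torus is equivalent to a nonzero
Laurent polynomial), then `Y` is a translate of a hyperplane with integer normal
vector. -/
theorem hyperplane_with_algebraic_exponential_image_is_rational
    (n : ℕ) (a : Fin n → ℂ) (ha : a ≠ 0) (c : ℂ)
    (L : MvPolynomial (Fin n) ℂ) (hL : L ≠ 0)
    (hvanish : ∀ s : Fin n → ℂ, (∑ i, a i * s i) = c →
      MvPolynomial.eval
        (fun i => Complex.exp (2 * (Real.pi : ℂ) * Complex.I * s i)) L = 0) :
    ∃ b : Fin n → ℤ, b ≠ 0 ∧ ∃ d : ℂ,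
      ∀ s : Fin n → ℂ, (∑ i, a i * s i) = c → (∑ i, (b i : ℂ) * s i) = d := by
  classical
  set z : ℂ := 2 * (Real.pi : ℂ) * Complex.I with hz_def
  have hz : z ≠ 0 := by
    simp [hz_def, Real.pi_ne_zero, Complex.I_ne_zero]
  -- a base point on Y
  obtain ⟨j, hj⟩ : ∃ j, a j ≠ 0 := by
    by_contra h
    push_neg at h
    exact ha (funext fun i => h i)
  set s₀ : Fin n → ℂ := fun i => if i = j then c / a j else 0 with hs₀_def
  have hs₀Y : (∑ i, a i * s₀ i) = c := by
    rw [hs₀_def]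
    rw [Finset.sum_eq_single j]
    · simp [hj, mul_div_cancel₀]
    · intro i _ hij; simp [hij]
    · intro h; exact absurd (Finset.mem_univ j) h
  by_cases hcase : ∃ m ∈ L.support, ∃ m' ∈ L.support, m ≠ m' ∧
      ∀ v : Fin n → ℂ, (∑ i, a i * v i) = 0 → ell m v = ell m' v
  · -- two monomials agree on the kernel: integer normal vector m - m'
    obtain ⟨m, _, m', _, hmm', hconst⟩ := hcase
    refine ⟨fun i => (m i : ℤ) - (m' i : ℤ), ?_, ∑ i, (((m i : ℤ) - (m' i : ℤ) : ℤ) : ℂ) * s₀ i,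
      ?_⟩
    · intro hb0
      apply hmm'
      ext i
      have := congrFun hb0 i
      simp only [Pi.zero_apply, sub_eq_zero] at this
      exact_mod_cast this
    · intro s hs
      have hv : (∑ i, a i * (s - s₀) i) = 0 := by
        simp [mul_sub, Finset.sum_sub_distrib, hs, hs₀Y]
      have h1 : ell m (s - s₀) = ell m' (s - s₀) := hconst _ hv
      have h2 : ∀ t : Fin n → ℂ, (∑ i, (((m i : ℤ) - (m' i : ℤ) : ℤ) : ℂ) * t i)
          = ell m t - ell m' t := by
        intro t
        rw [ell, ell, ← Finset.sum_sub_distrib]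
        refine Finset.sum_congr rfl fun i _ => ?_
        push_cast
        ring
      rw [h2, h2]
      have h3 : ell m (s - s₀) = ell m s - ell m s₀ := by
        rw [ell, ell, ell, ← Finset.sum_sub_distrib]
        exact Finset.sum_congr rfl fun i _ => by simp [mul_sub]
      have h4 : ell m' (s - s₀) = ell m' s - ell m' s₀ := by
        rw [ell, ell, ell, ← Finset.sum_sub_distrib]
        exact Finset.sum_congr rfl fun i _ => by simp [mul_sub]
      rw [h3, h4] at h1
      linear_combination h1
  · -- otherwise all characters are distinct; contradiction with Dedekind independence
    exfalso
    push_neg at hcase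
    -- distinct monomials in the support give distinct characters
    have hinj : ∀ m ∈ L.support, ∀ m' ∈ L.support, chi a z m = chi a z m' → m = m' := by
      intro m hm m' hm' hchi
      by_contra hne
      obtain ⟨v, hv0, hvne⟩ := hcase m hm m' hm' hne
      set t : ℂ := ell m v - ell m' v with ht_def
      have ht : t ≠ 0 := sub_ne_zero.mpr hvne
      -- scale v so that the phase difference is exactly π i
      have hw0 : ((Real.pi : ℂ) * Complex.I / (z * t)) • v ∈ V a := by
        have hv0' : v ∈ V a := hv0
        exact Submodule.smul_mem _ _ hv0'
      set w : V a := ⟨_, hw0⟩ with hw_def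
      have hchi_w := congrFun (congrArg (fun f : Multiplicative (V a) →* ℂ => (f : Multiplicative (V a) → ℂ)) hchi) (Multiplicative.ofAdd w)
      simp only [chi, MonoidHom.coe_mk, OneHom.coe_mk, toAdd_ofAdd] at hchi_w
      have hell : ∀ mm : Fin n →₀ ℕ, ell mm ((w : Fin n → ℂ))
          = ((Real.pi : ℂ) * Complex.I / (z * t)) * ell mm v := by
        intro mm
        rw [hw_def]
        exact ell_smul mm _ v
      rw [hell m, hell m'] at hchi_w
      have hdiff : z * (((Real.pi : ℂ) * Complex.I / (z * t)) * ell m v)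
          = z * (((Real.pi : ℂ) * Complex.I / (z * t)) * ell m' v) + (Real.pi : ℂ) * Complex.I := by
        field_simp
        linear_combination (-(z * (Real.pi : ℂ) * Complex.I)) * ht_def
      rw [hdiff, Complex.exp_add, Complex.exp_pi_mul_I] at hchi_w
      have := Complex.exp_ne_zero (z * (((Real.pi : ℂ) * Complex.I / (z * t)) * ell m' v))
      rw [mul_neg_one] at hchi_w
      -- hchi_w : -exp(..) = exp(..)
      have h2 : (2 : ℂ) * Complex.exp (z * (((Real.pi : ℂ) * Complex.I / (z * t)) * ell m' v)) = 0 := by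
        linear_combination -hchi_w
      simp [this] at h2
    -- the linear combination of characters vanishing
    set g : (Fin n →₀ ℕ) → ℂ := fun m => L.coeff m * Complex.exp (z * ell m s₀) with hg_def
    have hsum : ∑ m ∈ L.support.attach, g m.1 • ((chi a z m.1 : Multiplicative (V a) → ℂ)) = 0 := by
      funext v
      have hvY : (∑ i, a i * (s₀ + ((Multiplicative.toAdd v : V a) : Fin n → ℂ)) i) = c := by
        have hmem : (∑ i, a i * ((Multiplicative.toAdd v : V a) : Fin n → ℂ) i) = 0 :=
          (Multiplicative.toAdd v : V a).2
        simp only [Pi.add_apply, mul_add, Finset.sum_add_distrib, hs₀Y, hmem, add_zero]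
      have hev := hvanish _ hvY
      rw [eval_exp_eq z L] at hev
      have : ∀ m ∈ L.support, L.coeff m * Complex.exp (z * ell m (s₀ + ((Multiplicative.toAdd v : V a) : Fin n → ℂ)))
          = g m * (chi a z m v) := by
        intro m _
        simp only [hg_def, chi, MonoidHom.coe_mk, OneHom.coe_mk]
        rw [ell_add, mul_add, Complex.exp_add]
        ring
      rw [Finset.sum_congr rfl this] at hev
      simpa [Finset.sum_attach L.support (fun m => g m * (chi a z m v))] using hev
    have hLI : LinearIndependent ℂ (fun m : {m // m ∈ L.support} =>
        ((chi a z m.1 : Multiplicative (V a) → ℂ))) := by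
      refine (linearIndependent_monoidHom (Multiplicative (V a)) ℂ).comp
        (fun m : {m // m ∈ L.support} => chi a z m.1) ?_
      intro m m' h
      exact Subtype.ext (hinj m.1 m.2 m'.1 m'.2 h)
    have hzero := Fintype.linearIndependent_iff.mp hLI (fun m => g m.1) ?_
    · obtain ⟨m, hm⟩ := (MvPolynomial.support_nonempty.mpr hL)
      have := hzero ⟨m, hm⟩
      simp only [hg_def] at this
      rcases mul_eq_zero.mp this with h | h
      · exact (MvPolynomial.mem_support_iff.mp hm) h
      · exact Complex.exp_ne_zero _ h
    · rw [Finset.univ_eq_attach]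
      exact hsum
end

section
/- Let X be a topological space, A a countable family of linear conditions: for each s ∈ ℂ^n let Γ(s)_N ⊆ W_N be the solution space in a finite-dimensional space W_N of a finite system of homogeneous linear equations with coefficients polynomial in s, with W_N ⊆ W_{N+1} and Γ(s)_N ⊆ Γ(s)_{N+1}, and Γ(s) = ⋃_N Γ(s)_N with dim Γ(s) ≤ D for all s. Then for each d, the set {s : dim Γ(s) ≥ d} is a countable union of Zariski closed subsets of ℂ^n, and there exists a maximal d₀ with {s : dim Γ(s) ≥ d₀} = ℂ^n; moreover there exists N such that dim Γ(s)_N ≥ d₀ for all s. -/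
/-!
`dim Γ(s)_N ≥ d` says that the polynomial matrix `A_N(s)` has rank at most `k_N - d`, i.e. that
all its minors of size `k_N - d + 1` vanish; so each level set `{s | d ≤ dim Γ(s)_N}` is Zariski
closed and `{s | d ≤ dim Γ(s)}` is their countable union. Over the uncountable field `ℂ` no
countable union of proper Zariski closed sets covers `ℂⁿ`, so for `d₀ = min_s dim Γ(s)` a single
level `N` already has `dim Γ(s)_N ≥ d₀` everywhere.
-/

open Matrix Module Set

section Minors

variable {K V ι m n : Type*} [Field K]

theorem exists_linearIndependent_comp_of_le_finrank_span [AddCommGroup V] [Module K V] [Finite ι]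
    (v : ι → V) {r : ℕ} (h : r ≤ finrank K (Submodule.span K (range v))) :
    ∃ g : Fin r → ι, LinearIndependent K (v ∘ g) := by
  obtain ⟨κ, a, ha, hspan, hli⟩ := exists_linearIndependent' K v
  have : Finite κ := Finite.of_injective a ha
  cases nonempty_fintype κ
  rw [← hspan, finrank_span_eq_card hli] at h
  obtain ⟨e⟩ := Function.Embedding.nonempty_of_card_le (α := Fin r) (by simpa using h)
  exact ⟨a ∘ e, hli.comp e e.injective⟩

variable [Fintype m] [Fintype n]

theorem Matrix.le_rank_iff_exists_det_submatrix_ne_zero (M : Matrix m n K) (r : ℕ) :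
    r ≤ M.rank ↔ ∃ (f : Fin r → m) (g : Fin r → n), (M.submatrix f g).det ≠ 0 := by
  classical
  constructor
  · intro h
    rw [rank_eq_finrank_span_cols] at h
    obtain ⟨g, hg⟩ := exists_linearIndependent_comp_of_le_finrank_span M.col h
    have hB : r ≤ (M.submatrix id g).rank := by
      rw [← rank_transpose, transpose_submatrix,
        (show LinearIndependent K (Mᵀ.submatrix g id).row from hg).rank_matrix, Fintype.card_fin]
    rw [rank_eq_finrank_span_row] at hB
    obtain ⟨f, hf⟩ := exists_linearIndependent_comp_of_le_finrank_span (M.submatrix id g).row hB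
    exact ⟨f, g, ((isUnit_iff_isUnit_det _).1 (linearIndependent_rows_iff_isUnit.1 hf)).ne_zero⟩
  · rintro ⟨f, g, hfg⟩
    simpa [rank_of_det_ne_zero hfg] using rank_submatrix_le M f g

end Minors

def IsAlgebraicSet {K σ : Type*} [CommSemiring K] (Z : Set (σ → K)) : Prop :=
  ∃ T : Set (MvPolynomial σ K), Z = {s | ∀ p ∈ T, MvPolynomial.eval s p = 0}

section AlgebraicSet

open MvPolynomial

variable {K σ m n : Type*} [Field K]

theorem IsAlgebraicSet.empty : IsAlgebraicSet (∅ : Set (σ → K)) :=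
  ⟨{1}, by simp⟩

variable [Fintype m] [Fintype n]

theorem isAlgebraicSet_setOf_rank_le (P : Matrix m n (MvPolynomial σ K)) (r : ℕ) :
    IsAlgebraicSet {s | (P.map (eval s)).rank ≤ r} := by
  refine ⟨range fun fg : (Fin (r + 1) → m) × (Fin (r + 1) → n) => (P.submatrix fg.1 fg.2).det,
    ?_⟩
  ext s
  rw [mem_ofPred_eq, ← not_lt, Nat.lt_iff_add_one_le, le_rank_iff_exists_det_submatrix_ne_zero]
  simp only [not_exists, not_not, mem_ofPred_eq, forall_mem_range, Prod.forall, RingHom.map_det,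
    RingHom.mapMatrix_apply, submatrix_map]

theorem isAlgebraicSet_setOf_le_finrank_ker (P : Matrix m n (MvPolynomial σ K)) (d : ℕ) :
    IsAlgebraicSet {s | d ≤ finrank K (LinearMap.ker (P.map (eval s)).mulVecLin)} := by
  have rank_add_finrank_ker (s : σ → K) :
      (P.map (eval s)).rank + finrank K (LinearMap.ker (P.map (eval s)).mulVecLin) =
        Fintype.card n := by
    simpa [Matrix.rank] using LinearMap.finrank_range_add_finrank_ker (P.map (eval s)).mulVecLin
  by_cases hd : d ≤ Fintype.card n
  · convert isAlgebraicSet_setOf_rank_le P (Fintype.card n - d) using 3 with s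
    have := rank_add_finrank_ker s
    omega
  · convert IsAlgebraicSet.empty (K := K) (σ := σ)
    refine eq_empty_of_forall_notMem fun s hs => hd ?_
    have := rank_add_finrank_ker s
    simp only [mem_ofPred_eq] at hs
    omega

end AlgebraicSet

section Uncountable

open MvPolynomial

variable {K ι : Type*} [Field K] [Uncountable K] [Countable ι]

theorem MvPolynomial.exists_forall_eval_ne_zero {n : ℕ} (F : ι → MvPolynomial (Fin n) K)
    (hF : ∀ i, F i ≠ 0) : ∃ s : Fin n → K, ∀ i, eval s (F i) ≠ 0 := by
  induction n with
  | zero =>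
    refine ⟨finZeroElim, fun i h => hF i (funext fun x => ?_)⟩
    rwa [Subsingleton.elim x finZeroElim, map_zero]
  | succ n ih =>
    -- Make the leading coefficients in the last variable nonzero, then avoid the countably many
    -- roots of the resulting nonzero one-variable polynomials.
    set q := fun i => finSuccEquiv K n (F i)
    have hq (i : ι) : q i ≠ 0 := (map_ne_zero_iff _ (finSuccEquiv K n).injective).2 (hF i)
    obtain ⟨a, ha⟩ := ih (fun i => (q i).leadingCoeff) fun i =>
      Polynomial.leadingCoeff_ne_zero.2 (hq i)
    have hqa (i : ι) : (q i).map (eval a) ≠ 0 := by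
      intro h
      apply ha i
      rw [Polynomial.leadingCoeff, ← Polynomial.coeff_map, h, Polynomial.coeff_zero]
    have hroots : (⋃ i, {t : K | ((q i).map (eval a)).IsRoot t}).Countable :=
      countable_iUnion fun i => (Polynomial.finite_setOfPred_isRoot (hqa i)).countable
    obtain ⟨t, ht⟩ : ∃ t, t ∉ ⋃ i, {t : K | ((q i).map (eval a)).IsRoot t} := by
      by_contra! h
      exact not_countable_univ (hroots.mono fun t _ => h t)
    refine ⟨Fin.cons t a, fun i h => ht (mem_iUnion.2 ⟨i, ?_⟩)⟩
    rwa [eval_eq_eval_mv_eval'] at h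

theorem IsAlgebraicSet.exists_eq_univ_of_iUnion_eq_univ {n : ℕ} {Z : ι → Set (Fin n → K)}
    (hZ : ∀ i, IsAlgebraicSet (Z i)) (hcover : ⋃ i, Z i = univ) : ∃ i, Z i = univ := by
  choose T hT using hZ
  by_contra! hproper
  have hwitness (i : ι) : ∃ p ∈ T i, p ≠ 0 := by
    obtain ⟨s, hs⟩ := (ne_univ_iff_exists_notMem _).1 (hproper i)
    rw [hT i] at hs
    simp only [mem_ofPred_eq, not_forall] at hs
    obtain ⟨p, hp, hps⟩ := hs
    exact ⟨p, hp, fun h => hps (h ▸ map_zero _)⟩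
  choose p hpT hp0 using hwitness
  obtain ⟨s, hs⟩ := exists_forall_eval_ne_zero p hp0
  obtain ⟨i, hi⟩ := mem_iUnion.1 (hcover.symm ▸ mem_univ s : s ∈ ⋃ i, Z i)
  rw [hT i] at hi
  exact hs i (hi _ (hpT i))

end Uncountable

instance Complex.instUncountable : Uncountable ℂ :=
  not_countable_univ_iff.1 not_countable_complex

theorem Nat.le_ciSup_iff_exists_le {ι : Type*} [Nonempty ι] {f : ι → ℕ}
    (hf : BddAbove (range f)) {d : ℕ} : d ≤ ⨆ i, f i ↔ ∃ i, d ≤ f i := by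
  refine ⟨fun h => ?_, fun ⟨i, hi⟩ => hi.trans (le_ciSup hf i)⟩
  obtain ⟨i, hi⟩ := Nat.sSup_mem (range_nonempty f) hf
  exact ⟨i, hi ▸ h⟩

theorem jumping_locus_countable_union_and_generic_dimension_general
    (n : ℕ) (k m : ℕ → ℕ)
    (A : ∀ N : ℕ, (Fin n → ℂ) → Matrix (Fin (m N)) (Fin (k N)) ℂ)
    (P : ∀ N : ℕ, Fin (m N) → Fin (k N) → MvPolynomial (Fin n) ℂ)
    (hpoly : ∀ N s i j, A N s i j = MvPolynomial.eval s (P N i j))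
    (dimΓ : (Fin n → ℂ) → ℕ → ℕ)
    (hdim : ∀ s N, dimΓ s N = Module.finrank ℂ (LinearMap.ker (A N s).mulVecLin))
    (D : ℕ) (hbd : ∀ s N, dimΓ s N ≤ D) :
    (∀ d : ℕ, ∃ Z : ℕ → Set (Fin n → ℂ),
      (∀ j, ∃ T : Set (MvPolynomial (Fin n) ℂ),
        Z j = {s | ∀ p ∈ T, MvPolynomial.eval s p = 0}) ∧
      {s : Fin n → ℂ | d ≤ ⨆ N, dimΓ s N} = ⋃ j, Z j) ∧
    ∃ d₀ : ℕ,
      {s : Fin n → ℂ | d₀ ≤ ⨆ N, dimΓ s N} = Set.univ ∧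
      (∀ d : ℕ, {s : Fin n → ℂ | d ≤ ⨆ N, dimΓ s N} = Set.univ → d ≤ d₀) ∧
      ∃ N : ℕ, ∀ s : Fin n → ℂ, d₀ ≤ dimΓ s N := by
  have hlocus (d N : ℕ) : IsAlgebraicSet {s | d ≤ dimΓ s N} := by
    have hA : A N = fun s => (Matrix.of (P N)).map (MvPolynomial.eval s) :=
      funext fun s => Matrix.ext (hpoly N s)
    simp only [hdim]
    rw [hA]
    exact isAlgebraicSet_setOf_le_finrank_ker (Matrix.of (P N)) d
  have hsup (s : Fin n → ℂ) (d : ℕ) : d ≤ ⨆ N, dimΓ s N ↔ ∃ N, d ≤ dimΓ s N :=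
    Nat.le_ciSup_iff_exists_le ⟨D, forall_mem_range.2 (hbd s)⟩
  refine ⟨fun d => ⟨fun N => {s | d ≤ dimΓ s N}, hlocus d, ?_⟩, ?_⟩
  · ext s
    simp only [mem_ofPred_eq, mem_iUnion, hsup]
  set d₀ := ⨅ s, ⨆ N, dimΓ s N
  have hd₀ (s : Fin n → ℂ) : d₀ ≤ ⨆ N, dimΓ s N := ciInf_le' _ s
  obtain ⟨N, hN⟩ := IsAlgebraicSet.exists_eq_univ_of_iUnion_eq_univ (hlocus d₀)
    (eq_univ_of_forall fun s => mem_iUnion.2 ((hsup s d₀).1 (hd₀ s)))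
  exact ⟨d₀, eq_univ_of_forall hd₀, fun d hd => le_ciInf fun s => (hd ▸ mem_univ s :),
    N, fun s => (hN ▸ mem_univ s :)⟩

/-- jumping locus setup: `Γ(s)_N` is the kernel of a matrix `A N s`
with entries polynomial in `s`, the dimensions `dimΓ s N` are nondecreasing in `N`
(since `Γ(s)_N ⊆ Γ(s)_{N+1}`) and uniformly bounded by `D`. Then for each `d` the
set `{s : dim Γ(s) ≥ d}` is a countable union of Zariski closed subsets, there is a
maximal `d₀` with `{s : dim Γ(s) ≥ d₀} = ℂⁿ`, and there is `N` with
`dim Γ(s)_N ≥ d₀` for all `s`. -/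
theorem jumping_locus_countable_union_and_generic_dimension
    (n : ℕ) (k m : ℕ → ℕ)
    (A : ∀ N : ℕ, (Fin n → ℂ) → Matrix (Fin (m N)) (Fin (k N)) ℂ)
    (P : ∀ N : ℕ, Fin (m N) → Fin (k N) → MvPolynomial (Fin n) ℂ)
    (hpoly : ∀ N s i j, A N s i j = MvPolynomial.eval s (P N i j))
    (dimΓ : (Fin n → ℂ) → ℕ → ℕ)
    (hdim : ∀ s N, dimΓ s N = Module.finrank ℂ (LinearMap.ker (A N s).mulVecLin))
    (hmono : ∀ s, Monotone (dimΓ s))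
    (D : ℕ) (hbd : ∀ s N, dimΓ s N ≤ D) :
    (∀ d : ℕ, ∃ Z : ℕ → Set (Fin n → ℂ),
      (∀ j, ∃ T : Set (MvPolynomial (Fin n) ℂ),
        Z j = {s | ∀ p ∈ T, MvPolynomial.eval s p = 0}) ∧
      {s : Fin n → ℂ | d ≤ ⨆ N, dimΓ s N} = ⋃ j, Z j) ∧
    ∃ d₀ : ℕ,
      {s : Fin n → ℂ | d₀ ≤ ⨆ N, dimΓ s N} = Set.univ ∧
      (∀ d : ℕ, {s : Fin n → ℂ | d ≤ ⨆ N, dimΓ s N} = Set.univ → d ≤ d₀) ∧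
      ∃ N : ℕ, ∀ s : Fin n → ℂ, d₀ ≤ dimΓ s N :=
  jumping_locus_countable_union_and_generic_dimension_general n k m A P hpoly dimΓ hdim D hbd
end

section
/- Let ρ : ℂ → Mat_N(ℂ) be a holomorphic family of representation data such that each matrix entry is exponentially bounded, and suppose ρ(s+1) is conjugate to ρ(s) for all s in a set not contained in a countable union of proper analytic subsets of ℂ. If Ψ is any conjugation-invariant polynomial function on Mat_N(ℂ) (e.g. a coefficient of the characteristic polynomial), then s ↦ Ψ(ρ(s)) equals F(e^{2πis}) for a rational function F on ℂ^×. -/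
/-!
Write `f s = Ψ (ρ s)`. It is entire and of exponential type, being a polynomial in the entries of
`ρ`. The entire function `f (s + 1) - f s` vanishes on `S`, which is not contained in the zero set
of a nonzero entire function, so `f` is `1`-periodic. Periodicity turns the bound in `|s|` into a
bound `e^{c |Im s|}`, so with `q = e^{2πis}` the function `q^m f` is bounded as `Im s → ∞` and
grows at most like `|q|^{2m}` as `Im s → -∞`. Its cusp function is therefore entire
(removable singularity at `q = 0`) of polynomial growth, hence a polynomial `p` by Liouville,
and `f = p(q) / q^m`.
-/

open Complex Polynomial Function Filter Function.Periodic
open scoped Real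

theorem Differentiable.exists_polynomial_eq_of_norm_le_pow {f : ℂ → ℂ}
    (hf : Differentiable ℂ f) {A : ℝ} {n : ℕ} (hb : ∀ z, 1 ≤ ‖z‖ → ‖f z‖ ≤ A * ‖z‖ ^ n) :
    ∃ p : ℂ[X], ∀ z, f z = p.eval z := by
  induction n generalizing f A with
  | zero =>
    obtain ⟨B, hB⟩ := (isCompact_closedBall (0 : ℂ) 1).exists_bound_of_continuousOn
      hf.continuous.continuousOn
    have hbdd : Bornology.IsBounded (Set.range f) := by
      refine isBounded_iff_forall_norm_le.2 ⟨max A B, ?_⟩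
      rintro _ ⟨z, rfl⟩
      rcases le_or_gt 1 ‖z‖ with hz | hz
      · exact (hb z hz).trans (by simp)
      · exact (hB z (by simpa using hz.le)).trans (le_max_right A B)
    obtain ⟨c, hc⟩ := hf.exists_eq_const_of_bounded hbdd
    exact ⟨C c, fun z => by simp [hc]⟩
  | succ n ih =>
    have hg : Differentiable ℂ (dslope f 0) := by
      rw [← differentiableOn_univ] at hf ⊢
      exact (Complex.differentiableOn_dslope univ_mem).2 hf
    have hgb : ∀ z, 1 ≤ ‖z‖ → ‖dslope f 0 z‖ ≤ (A + ‖f 0‖) * ‖z‖ ^ n := by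
      intro z hz
      have hz0 : z ≠ 0 := norm_pos_iff.1 (zero_lt_one.trans_le hz)
      rw [dslope_of_ne f hz0, slope_def_field, sub_zero, norm_div,
        div_le_iff₀ (norm_pos_iff.2 hz0)]
      calc ‖f z - f 0‖ ≤ ‖f z‖ + ‖f 0‖ := norm_sub_le _ _
        _ ≤ A * ‖z‖ ^ (n + 1) + ‖f 0‖ * ‖z‖ ^ (n + 1) :=
          add_le_add (hb z hz) (le_mul_of_one_le_right (norm_nonneg _) (one_le_pow₀ hz))
        _ = (A + ‖f 0‖) * ‖z‖ ^ n * ‖z‖ := by ring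
    obtain ⟨p, hp⟩ := ih hg hgb
    refine ⟨C (f 0) + X * p, fun z => ?_⟩
    have hs := sub_smul_dslope f 0 z
    rw [sub_zero, smul_eq_mul, hp] at hs
    simp only [eval_add, eval_C, eval_mul, eval_X]
    linear_combination -hs

def ExpBounded (f : ℂ → ℂ) : Prop :=
  ∃ A c : ℝ, 0 ≤ A ∧ 0 ≤ c ∧ ∀ s, ‖f s‖ ≤ A * Real.exp (c * ‖s‖)

namespace ExpBounded

variable {f g : ℂ → ℂ}

theorem const (a : ℂ) : ExpBounded fun _ => a :=
  ⟨‖a‖, 0, norm_nonneg a, le_rfl, fun s => by simp⟩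

theorem add (hf : ExpBounded f) (hg : ExpBounded g) : ExpBounded fun s => f s + g s := by
  obtain ⟨A, c, hA, hc, hf⟩ := hf
  obtain ⟨B, d, hB, hd, hg⟩ := hg
  refine ⟨A + B, c + d, by positivity, by positivity, fun s => ?_⟩
  have hc' : Real.exp (c * ‖s‖) ≤ Real.exp ((c + d) * ‖s‖) := by gcongr; linarith
  have hd' : Real.exp (d * ‖s‖) ≤ Real.exp ((c + d) * ‖s‖) := by gcongr; linarith
  calc ‖f s + g s‖ ≤ A * Real.exp (c * ‖s‖) + B * Real.exp (d * ‖s‖) :=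
        (norm_add_le _ _).trans (add_le_add (hf s) (hg s))
    _ ≤ (A + B) * Real.exp ((c + d) * ‖s‖) := by rw [add_mul]; gcongr

theorem mul (hf : ExpBounded f) (hg : ExpBounded g) : ExpBounded fun s => f s * g s := by
  obtain ⟨A, c, hA, hc, hf⟩ := hf
  obtain ⟨B, d, hB, hd, hg⟩ := hg
  refine ⟨A * B, c + d, by positivity, by positivity, fun s => ?_⟩
  calc ‖f s * g s‖ = ‖f s‖ * ‖g s‖ := norm_mul _ _
    _ ≤ A * Real.exp (c * ‖s‖) * (B * Real.exp (d * ‖s‖)) :=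
        mul_le_mul (hf s) (hg s) (norm_nonneg _) ((norm_nonneg _).trans (hf s))
    _ = A * B * Real.exp ((c + d) * ‖s‖) := by rw [add_mul, Real.exp_add]; ring

theorem mvPolynomial_eval {σ : Type*} {f : σ → ℂ → ℂ} (hf : ∀ i, ExpBounded (f i))
    (P : MvPolynomial σ ℂ) : ExpBounded fun s => MvPolynomial.eval (fun i => f i s) P := by
  induction P using MvPolynomial.induction_on with
  | C a => simpa using const a
  | add p q hp hq => simpa using hp.add hq
  | mul_X p i hp => simpa using hp.mul (hf i)

end ExpBounded

theorem Differentiable.mvPolynomial_eval {σ : Type*} {f : σ → ℂ → ℂ}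
    (hf : ∀ i, Differentiable ℂ (f i)) (P : MvPolynomial σ ℂ) :
    Differentiable ℂ fun s => MvPolynomial.eval (fun i => f i s) P := fun s => by
  simpa only [MvPolynomial.aeval_eq_eval] using (AnalyticAt.aeval_mvPolynomial
    (f := fun s i => f i s) (fun i => (hf i).analyticAt s) P).differentiableAt

theorem Differentiable.eq_zero_of_eqOn_zero_of_not_covered_by_zero_sets {d : ℂ → ℂ} {S : Set ℂ}
    (hS : ¬ ∃ Z : ℕ → Set ℂ,
      (∀ k, ∃ f : ℂ → ℂ, Differentiable ℂ f ∧ f ≠ 0 ∧ Z k ⊆ f ⁻¹' {0}) ∧ S ⊆ ⋃ k, Z k)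
    (hd : Differentiable ℂ d) (hdS : Set.EqOn d 0 S) : d = 0 := by
  by_contra hne
  exact hS ⟨fun _ => d ⁻¹' {0}, fun _ => ⟨d, hd, hne, subset_rfl⟩,
    fun s hs => Set.mem_iUnion.2 ⟨0, hdS hs⟩⟩

theorem Function.Periodic.norm_le_mul_exp_abs_im {f : ℂ → ℂ} {h A c : ℝ} (hf : Periodic f h)
    (hh : 0 < h) (hA : 0 ≤ A) (hc : 0 ≤ c) (hb : ∀ s, ‖f s‖ ≤ A * Real.exp (c * ‖s‖)) (s : ℂ) :
    ‖f s‖ ≤ A * Real.exp (c * h) * Real.exp (c * |s.im|) := by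
  have hφ : Periodic (fun t : ℝ => f (t + s.im * I)) h := fun t => by
    simpa [add_right_comm] using hf (t + s.im * I)
  obtain ⟨t, ⟨ht0, hth⟩, hft⟩ := hφ.exists_mem_Ico₀ hh s.re
  have hnorm : ‖(t : ℂ) + s.im * I‖ ≤ h + |s.im| := by
    refine (norm_le_abs_re_add_abs_im _).trans ?_
    simp [abs_of_nonneg ht0, hth.le]
  calc ‖f s‖ = ‖f (t + s.im * I)‖ := by rw [← hft, re_add_im]
    _ ≤ A * Real.exp (c * (h + |s.im|)) := (hb _).trans (by gcongr)
    _ = A * Real.exp (c * h) * Real.exp (c * |s.im|) := by rw [mul_add, Real.exp_add, mul_assoc]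

theorem Real.exp_neg_pow_mul_exp_abs (x : ℝ) (m : ℕ) :
    Real.exp (-x) ^ m * Real.exp (m * |x|) = max 1 (Real.exp (-x)) ^ (2 * m) := by
  rcases le_total 0 x with hx | hx
  · rw [abs_of_nonneg hx, max_eq_left (Real.exp_le_one_iff.2 (neg_nonpos.2 hx)), one_pow,
      ← Real.exp_nat_mul, ← Real.exp_add]
    simp
  · rw [abs_of_nonpos hx, max_eq_right (Real.one_le_exp (neg_nonneg.2 hx)), ← Real.exp_nat_mul,
      ← Real.exp_nat_mul, ← Real.exp_add]
    push_cast
    ring_nf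

theorem Function.Periodic.qParam_periodic {h : ℝ} (hh : h ≠ 0) : Periodic (qParam h) h := by
  intro s
  simp only [qParam, mul_add, add_div, mul_div_assoc, div_self (ofReal_ne_zero.2 hh), mul_one,
    exp_periodic _]

theorem Function.Periodic.differentiable_cuspFunction {f : ℂ → ℂ} {h : ℝ} (hh : 0 < h)
    (hf : Periodic f h) (hd : Differentiable ℂ f) (hb : BoundedAtFilter (comap im atTop) f) :
    Differentiable ℂ (cuspFunction h f) := by
  intro q
  rcases eq_or_ne q 0 with rfl | hq
  · exact differentiableAt_cuspFunction_zero hh hf (Eventually.of_forall hd) hb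
  · rw [← qParam_right_inv hh.ne' hq]
    exact differentiableAt_cuspFunction hh.ne' hf (hd _)

theorem Function.Periodic.exists_polynomial_eq_eval_qParam {f : ℂ → ℂ} {h B : ℝ} {n : ℕ}
    (hh : 0 < h) (hf : Periodic f h) (hd : Differentiable ℂ f)
    (hb : ∀ s, ‖f s‖ ≤ B * max 1 ‖qParam h s‖ ^ n) :
    ∃ p : ℂ[X], ∀ s, f s = p.eval (qParam h s) := by
  have hbdd : BoundedAtFilter (comap im atTop) f := by
    refine Asymptotics.IsBigO.of_bound B ?_
    filter_upwards [preimage_mem_comap (Ici_mem_atTop 0)] with s hs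
    have hq : ‖qParam h s‖ ≤ 1 := by
      rw [norm_qParam, Real.exp_le_one_iff]
      exact div_nonpos_of_nonpos_of_nonneg
        (mul_nonpos_of_nonpos_of_nonneg (by linarith [Real.pi_pos]) hs) hh.le
    simpa [max_eq_left hq] using hb s
  have hcusp := hf.differentiable_cuspFunction hh hd hbdd
  obtain ⟨p, hp⟩ := hcusp.exists_polynomial_eq_of_norm_le_pow (A := B) (n := n) fun q hq => by
      have hq0 : q ≠ 0 := norm_pos_iff.1 (zero_lt_one.trans_le hq)
      have := hb (invQParam h q)
      rw [qParam_right_inv hh.ne' hq0, max_eq_right hq] at this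
      rwa [← qParam_right_inv hh.ne' hq0, eq_cuspFunction hh.ne' hf, qParam_right_inv hh.ne' hq0]
  exact ⟨p, fun s => by rw [← eq_cuspFunction hh.ne' hf, hp]⟩

theorem Function.Periodic.exists_polynomial_eq_eval_qParam_div_pow {f : ℂ → ℂ} {h : ℝ}
    (hh : 0 < h) (hf : Periodic f h) (hd : Differentiable ℂ f) (hb : ExpBounded f) :
    ∃ (p : ℂ[X]) (m : ℕ), ∀ s, f s = p.eval (qParam h s) / qParam h s ^ m := by
  obtain ⟨A, c, hA, hc, hb⟩ := hb
  set m := ⌈c * h / (2 * π)⌉₊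
  have hg : Periodic (fun s => qParam h s ^ m * f s) h := fun s => by
    simp only [qParam_periodic hh.ne' s, hf s]
  have hgb : ∀ s, ‖qParam h s ^ m * f s‖ ≤
      A * Real.exp (c * h) * max 1 ‖qParam h s‖ ^ (2 * m) := fun s => by
    set x := 2 * π * s.im / h
    have hq : ‖qParam h s‖ = Real.exp (-x) := by rw [norm_qParam, neg_mul, neg_mul, neg_div]
    have hcx : c * |s.im| ≤ m * |x| := by
      rw [abs_div, abs_mul, abs_of_pos hh, abs_of_pos Real.two_pi_pos]
      calc c * |s.im| = c * h / (2 * π) * (2 * π * |s.im| / h) := by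
            field_simp
        _ ≤ m * (2 * π * |s.im| / h) := by gcongr; exact Nat.le_ceil _
    calc ‖qParam h s ^ m * f s‖ = ‖qParam h s‖ ^ m * ‖f s‖ := by rw [norm_mul, norm_pow]
      _ ≤ ‖qParam h s‖ ^ m * (A * Real.exp (c * h) * Real.exp (c * |s.im|)) := by
          gcongr; exact hf.norm_le_mul_exp_abs_im hh hA hc hb s
      _ ≤ ‖qParam h s‖ ^ m * (A * Real.exp (c * h) * Real.exp (m * |x|)) := by gcongr
      _ = A * Real.exp (c * h) * max 1 ‖qParam h s‖ ^ (2 * m) := by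
          rw [hq, ← Real.exp_neg_pow_mul_exp_abs]; ring
  obtain ⟨p, hp⟩ := hg.exists_polynomial_eq_eval_qParam hh
    ((differentiable_qParam.pow m).mul hd) hgb
  refine ⟨p, m, fun s => ?_⟩
  rw [eq_div_iff (pow_ne_zero _ (qParam_ne_zero s)), ← hp s, mul_comm]

/-- let `ρ : ℂ → Mat_N(ℂ)` be entrywise holomorphic and exponentially
bounded, with `ρ(s+1)` conjugate to `ρ(s)` for all `s` in a set `S` not contained in
a countable union of proper analytic subsets of ℂ (zero sets of nonzero entire
functions). Then for any conjugation-invariant polynomial function `Ψ` on `Mat_N(ℂ)`,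
`Ψ(ρ(s)) = F(e^{2πis})` for a rational function `F = p/q`. -/
theorem invariant_of_generically_periodic_family_rational_in_exp
    (N : ℕ) (ρ : ℂ → Matrix (Fin N) (Fin N) ℂ)
    (hhol : ∀ i j, Differentiable ℂ (fun s => ρ s i j))
    (hbound : ∃ C > 0, ∃ C' > 0, ∀ s : ℂ, ∀ i j,
      ‖ρ s i j‖ ≤ C' * Real.exp (C * ‖s‖))
    (S : Set ℂ)
    (hper : ∀ s ∈ S, ∃ g : Matrix (Fin N) (Fin N) ℂ, IsUnit g ∧
      ρ (s + 1) = g * ρ s * g⁻¹)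
    (hS : ¬ ∃ Z : ℕ → Set ℂ,
      (∀ k, ∃ f : ℂ → ℂ, Differentiable ℂ f ∧ f ≠ 0 ∧ Z k ⊆ f ⁻¹' {0}) ∧
      S ⊆ ⋃ k, Z k)
    (P : MvPolynomial (Fin N × Fin N) ℂ)
    (Ψ : Matrix (Fin N) (Fin N) ℂ → ℂ)
    (hΨ : ∀ A, Ψ A = MvPolynomial.eval (fun p => A p.1 p.2) P)
    (hinv : ∀ (g A : Matrix (Fin N) (Fin N) ℂ), IsUnit g → Ψ (g * A * g⁻¹) = Ψ A) :
    ∃ p q : Polynomial ℂ, q ≠ 0 ∧ ∀ s : ℂ,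
      q.eval (Complex.exp (2 * (Real.pi : ℂ) * Complex.I * s)) ≠ 0 →
      Ψ (ρ s) = p.eval (Complex.exp (2 * (Real.pi : ℂ) * Complex.I * s)) /
        q.eval (Complex.exp (2 * (Real.pi : ℂ) * Complex.I * s)) := by
  obtain ⟨C, hC, C', hC', hρ⟩ := hbound
  have hΨρ : (fun s => Ψ (ρ s)) = fun s => MvPolynomial.eval (fun p => ρ s p.1 p.2) P :=
    funext fun s => hΨ (ρ s)
  have hd : Differentiable ℂ fun s => Ψ (ρ s) := by
    have := Differentiable.mvPolynomial_eval (fun p => hhol p.1 p.2) P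
    rwa [hΨρ]
  have hexp : ExpBounded fun s => Ψ (ρ s) := by
    have hentry (p : Fin N × Fin N) : ExpBounded fun s => ρ s p.1 p.2 :=
      ⟨C', C, hC'.le, hC.le, fun s => hρ s p.1 p.2⟩
    have := ExpBounded.mvPolynomial_eval hentry P
    rwa [hΨρ]
  have hperiodic : Periodic (fun s => Ψ (ρ s)) ((1 : ℝ) : ℂ) := by
    have hshift : Differentiable ℂ fun s => Ψ (ρ (s + 1)) - Ψ (ρ s) :=
      (hd.comp (differentiable_id.add_const 1)).sub hd
    have := hshift.eq_zero_of_eqOn_zero_of_not_covered_by_zero_sets hS fun s hs => by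
      obtain ⟨g, hg, hρg⟩ := hper s hs
      simp [hρg, hinv g _ hg]
    exact fun s => by simpa [sub_eq_zero] using congrFun this s
  obtain ⟨p, m, hpm⟩ := hperiodic.exists_polynomial_eq_eval_qParam_div_pow one_pos hd hexp
  refine ⟨p, X ^ m, pow_ne_zero m X_ne_zero, fun s _ => ?_⟩
  simpa [qParam] using hpm s
end
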